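/- Let (U, W, B) be a linear system over ℂ and f : U ≃ W a linear equivalence satisfying B(f⁻¹(w), f(u)) = B(u, w) for all u ∈ U, w ∈ W (i.e. the system is self-dual via f). Set F := j_W ∘ f : U → U*, an injective linear map with range W̃. Then for every φ ∈ gl^M_{U,W} the endomorphism τ(φ) := −F⁻¹ ∘ φ* ∘ F of U is well defined and lies in gl^M_{U,W}, the map τ is a Lie algebra automorphism of gl^M_{U,W} with τ ∘ τ = id, and F intertwines the twisted action with the dual action: F(τ(φ)(u)) = −φ*(F(u)) for all u ∈ U. -/

import Mathlib

/-!
Self-duality makes `F := j_W ∘ f : U → U*` symmetric, `F u v = F v u`, so `τ(φ) = -F⁻¹ ∘ φ* ∘ F`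
is minus the adjoint of `φ` for the symmetric form `(u, v) ↦ F u v`. Hence `τ(φ)* ∘ F = -F ∘ φ`:
`τ(φ)*` preserves `W̃ = range F`, and `τ(τ(φ)) = φ`. Linearity and compatibility with brackets
follow by applying the injective `F`, since `(φ ∘ ψ)* = ψ* ∘ φ*`.
-/

open TensorProduct

variable {U W : Type*} [AddCommGroup U] [Module ℂ U] [AddCommGroup W] [Module ℂ W]

attribute [local instance 100] LieRing.ofAssociativeRing

/-- The Mackey Lie algebra `gl^M_{U,W}`: all `φ ∈ End ℂ U` whose dual map preserves
`W̃ = range (B.flip) ⊆ U*`. -/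
noncomputable def glMackey (B : U →ₗ[ℂ] W →ₗ[ℂ] ℂ) :
    LieSubalgebra ℂ (Module.End ℂ U) where
  carrier := {φ | ∀ ξ ∈ LinearMap.range B.flip, φ.dualMap ξ ∈ LinearMap.range B.flip}
  add_mem' := by
    intro a b ha hb ξ hξ
    have h : (a + b).dualMap ξ = a.dualMap ξ + b.dualMap ξ := by ext x; simp
    rw [h]
    exact Submodule.add_mem _ (ha ξ hξ) (hb ξ hξ)
  zero_mem' := by
    intro ξ hξ
    have h : (0 : Module.End ℂ U).dualMap ξ = 0 := by ext x; simp
    rw [h]; exact Submodule.zero_mem _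
  smul_mem' := by
    intro c a ha ξ hξ
    have h : (c • a).dualMap ξ = c • a.dualMap ξ := by ext x; simp
    rw [h]
    exact Submodule.smul_mem _ _ (ha ξ hξ)
  lie_mem' := by
    intro a b ha hb ξ hξ
    have h : (⁅a, b⁆ : Module.End ℂ U).dualMap ξ
        = b.dualMap (a.dualMap ξ) - a.dualMap (b.dualMap ξ) := by
      ext x; simp [Module.End.lie_apply]
    rw [h]
    exact Submodule.sub_mem _ (hb _ (ha ξ hξ)) (ha _ (hb ξ hξ))

namespace Module.End

open LinearMap

variable {R M : Type*} [CommRing R] [AddCommGroup M] [Module R M]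
  {F : M →ₗ[R] Dual R M} (hF : Function.Injective F)

/-- `-F⁻¹ ∘ φ* ∘ F`, defined when `φ*` maps the range of `F` into itself. -/
noncomputable def dualTwist (φ : Module.End R M) (hφ : ∀ u, φ.dualMap (F u) ∈ range F) :
    Module.End R M :=
  -((LinearEquiv.ofInjective F hF).symm.toLinearMap ∘ₗ (φ.dualMap ∘ₗ F).codRestrict _ hφ)

variable {φ ψ : Module.End R M}

theorem apply_dualTwist (hφ : ∀ u, φ.dualMap (F u) ∈ range F) (u : M) :
    F (dualTwist hF φ hφ u) = -φ.dualMap (F u) := by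
  simp [dualTwist]

theorem eq_dualTwist (hφ : ∀ u, φ.dualMap (F u) ∈ range F)
    (h : ∀ u, F (ψ u) = -φ.dualMap (F u)) : ψ = dualTwist hF φ hφ :=
  LinearMap.ext fun u => hF <| by rw [h, apply_dualTwist]

theorem dualTwist_add (hφ : ∀ u, φ.dualMap (F u) ∈ range F)
    (hψ : ∀ u, ψ.dualMap (F u) ∈ range F) (hφψ : ∀ u, (φ + ψ).dualMap (F u) ∈ range F) :
    dualTwist hF (φ + ψ) hφψ = dualTwist hF φ hφ + dualTwist hF ψ hψ :=
  (eq_dualTwist hF hφψ fun u => by ext x; simp [apply_dualTwist, add_comm]).symm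

theorem dualTwist_smul (c : R) (hφ : ∀ u, φ.dualMap (F u) ∈ range F)
    (hcφ : ∀ u, (c • φ).dualMap (F u) ∈ range F) :
    dualTwist hF (c • φ) hcφ = c • dualTwist hF φ hφ :=
  (eq_dualTwist hF hcφ fun u => by ext x; simp [apply_dualTwist]).symm

theorem dualTwist_lie (hφ : ∀ u, φ.dualMap (F u) ∈ range F)
    (hψ : ∀ u, ψ.dualMap (F u) ∈ range F) (hφψ : ∀ u, ⁅φ, ψ⁆.dualMap (F u) ∈ range F) :
    dualTwist hF ⁅φ, ψ⁆ hφψ = ⁅dualTwist hF φ hφ, dualTwist hF ψ hψ⁆ := by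
  refine (eq_dualTwist hF hφψ fun u => ?_).symm
  ext x
  simp [Ring.lie_def, apply_dualTwist]

theorem dualMap_dualTwist (hsymm : ∀ u v, F u v = F v u)
    (hφ : ∀ u, φ.dualMap (F u) ∈ range F) (v : M) :
    (dualTwist hF φ hφ).dualMap (F v) = F (-φ v) := by
  ext x
  rw [dualMap_apply, hsymm, apply_dualTwist, map_neg, LinearMap.neg_apply, LinearMap.neg_apply,
    dualMap_apply, hsymm]

theorem dualMap_dualTwist_mem (hsymm : ∀ u v, F u v = F v u)
    (hφ : ∀ u, φ.dualMap (F u) ∈ range F) (v : M) :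
    (dualTwist hF φ hφ).dualMap (F v) ∈ range F :=
  dualMap_dualTwist hF hsymm hφ v ▸ mem_range_self F _

theorem dualTwist_dualTwist (hsymm : ∀ u v, F u v = F v u)
    (hφ : ∀ u, φ.dualMap (F u) ∈ range F) :
    dualTwist hF (dualTwist hF φ hφ) (dualMap_dualTwist_mem hF hsymm hφ) = φ :=
  (eq_dualTwist hF _ fun u => by rw [dualMap_dualTwist hF hsymm, map_neg, neg_neg]).symm

end Module.End

namespace glMackey

open LinearMap Module.End

variable {B : U →ₗ[ℂ] W →ₗ[ℂ] ℂ} {F : U →ₗ[ℂ] Module.Dual ℂ U}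

theorem mem_iff_of_range_eq (hrange : range F = range B.flip) {φ : Module.End ℂ U} :
    φ ∈ glMackey B ↔ ∀ u, φ.dualMap (F u) ∈ range F := by
  change (∀ ξ ∈ range B.flip, φ.dualMap ξ ∈ range B.flip) ↔ _
  rw [← hrange]
  exact ⟨fun h u => h _ (mem_range_self F u), by rintro h _ ⟨u, rfl⟩; exact h u⟩

variable (hF : Function.Injective F) (hsymm : ∀ u v, F u v = F v u)
  (hrange : range F = range B.flip)

noncomputable def twist (φ : glMackey B) : glMackey B :=
  ⟨dualTwist hF φ ((mem_iff_of_range_eq hrange).1 φ.2),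
    (mem_iff_of_range_eq hrange).2 (dualMap_dualTwist_mem hF hsymm _)⟩

theorem twist_twist (φ : glMackey B) : twist hF hsymm hrange (twist hF hsymm hrange φ) = φ :=
  Subtype.ext (dualTwist_dualTwist hF hsymm _)

noncomputable def twistEquiv : glMackey B ≃ₗ⁅ℂ⁆ glMackey B where
  toFun := twist hF hsymm hrange
  map_add' _ _ := Subtype.ext (dualTwist_add hF _ _ _)
  map_smul' c _ := Subtype.ext (dualTwist_smul hF c _ _)
  map_lie' := Subtype.ext (dualTwist_lie hF _ _ _)
  invFun := twist hF hsymm hrange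
  left_inv := twist_twist hF hsymm hrange
  right_inv := twist_twist hF hsymm hrange

theorem apply_twistEquiv_apply (φ : glMackey B) (u : U) :
    F ((twistEquiv hF hsymm hrange φ : Module.End ℂ U) u) =
      -(φ : Module.End ℂ U).dualMap (F u) :=
  apply_dualTwist hF _ u

end glMackey

theorem stmt_13_general (B : U →ₗ[ℂ] W →ₗ[ℂ] ℂ)
    (hB2 : ∀ w : W, (∀ u : U, B u w = 0) → w = 0)
    (f : U ≃ₗ[ℂ] W) (hf : ∀ (u : U) (w : W), B (f.symm w) (f u) = B u w) :
    ∃ τ : ↥(glMackey B) ≃ₗ⁅ℂ⁆ ↥(glMackey B),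
      (∀ φ : ↥(glMackey B), τ (τ φ) = φ) ∧
      (∀ (φ : ↥(glMackey B)) (u x : U),
        B x (f ((τ φ : Module.End ℂ U) u)) = - B ((φ : Module.End ℂ U) x) (f u)) := by
  set F : U →ₗ[ℂ] Module.Dual ℂ U := B.flip ∘ₗ f.toLinearMap
  have hflip : Function.Injective B.flip :=
    LinearMap.ker_eq_bot.1 <| LinearMap.ker_eq_bot'.2 fun w hw => hB2 w (LinearMap.congr_fun hw)
  have hF : Function.Injective F := hflip.comp f.injective
  have hsymm : ∀ u v, F u v = F v u := fun u v => by
    simpa [F] using (hf v (f u)).symm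
  have hrange : LinearMap.range F = LinearMap.range B.flip :=
    LinearMap.range_comp_of_range_eq_top _ f.range
  exact ⟨glMackey.twistEquiv hF hsymm hrange, glMackey.twist_twist hF hsymm hrange,
    fun φ u x => LinearMap.congr_fun (glMackey.apply_twistEquiv_apply hF hsymm hrange φ u) x⟩

/-- Let `(U, W, B)` be a linear system which is self-dual via `f : U ≃ W`, i.e.
`B (f⁻¹ w) (f u) = B u w`.  With `F := j_W ∘ f : U → U*` (so `F u = B (·) (f u)`), the
map `τ(φ) = −F⁻¹ ∘ φ* ∘ F` is a well-defined involutive Lie algebra automorphism of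
`gl^M_{U,W}`, intertwined by `F` with the dual action: `F (τ(φ) u) = −φ*(F u)`, i.e.
`B x (f (τ(φ) u)) = −B (φ x) (f u)` for all `x, u ∈ U`. -/
theorem stmt_13 (B : U →ₗ[ℂ] W →ₗ[ℂ] ℂ)
    (hB1 : ∀ u : U, (∀ w : W, B u w = 0) → u = 0)
    (hB2 : ∀ w : W, (∀ u : U, B u w = 0) → w = 0)
    (f : U ≃ₗ[ℂ] W) (hf : ∀ (u : U) (w : W), B (f.symm w) (f u) = B u w) :
    ∃ τ : ↥(glMackey B) ≃ₗ⁅ℂ⁆ ↥(glMackey B),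
      (∀ φ : ↥(glMackey B), τ (τ φ) = φ) ∧
      (∀ (φ : ↥(glMackey B)) (u x : U),
        B x (f ((τ φ : Module.End ℂ U) u)) = - B ((φ : Module.End ℂ U) x) (f u)) :=
  stmt_13_general B hB2 f hf
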